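/- Let z_1,...,z_n be distinct points of CP^1 with nonzero lifts (u_i,v_i) and L_i(u,v) = u_i v - v_i u. Fix 1 <= k <= n-1 and d = n-k. For each k-subset I of {1,...,n} with complement J, define p_I = \odot_{j in J} Lambda_{L_j^k} in Sym^d(P_{1,k}^*). Then the binom(n,k) elements p_I are linearly independent over C. -/

import Mathlib

/-!
Test the forms `p_J` against `x_I = ∏_{i ∈ I} L_i`. Apolarity turns `(L_j^k, x)` into
`(-1)^k` times the homogenization of `x` evaluated at `(u_j, v_j)`, so
`p_J(x_I) = ± ∏_{j ∉ J} ∏_{i ∈ I} (u_i v_j - v_i u_j)`. For `|I| = |J|` this vanishes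
unless `I = J`, and the diagonal entries are nonzero because the points are distinct, so the
evaluation matrix is diagonal and invertible.
-/

open Polynomial Finset

/-- The bilinear pairing on binary forms of degree `k`, where a form
`q(u,v) = ∑ c_i u^(k-i) v^i` is encoded as the polynomial `∑ c_i X^i` (i.e. `u = 1`,
`X = v`):  `(q, q~) = ∑_{i=0}^k (-1)^i c_i d_{k-i} / binom(k,i)`. -/
noncomputable def bform (k : ℕ) (q r : Polynomial ℂ) : ℂ :=
  ∑ i ∈ Finset.range (k + 1), (-1) ^ i * q.coeff i * r.coeff (k - i) / (k.choose i : ℂ)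

theorem coeff_C_mul_X_add_C_pow {R : Type*} [CommSemiring R] (a b : R) (k i : ℕ) :
    ((C a * X + C b) ^ k).coeff i = k.choose i * a ^ i * b ^ (k - i) := by
  have hexpand : (C a * X + C b) ^ k =
      ∑ m ∈ range (k + 1), C (k.choose m * a ^ m * b ^ (k - m)) * X ^ m := by
    rw [add_pow]
    refine sum_congr rfl fun m _ => ?_
    simp only [map_mul, map_pow, map_natCast]
    ring
  simp only [hexpand, finsetSum_coeff, coeff_C_mul_X_pow, sum_ite_eq, mem_range]
  split_ifs with hi
  · rfl
  · simp [Nat.choose_eq_zero_of_lt (by omega : k < i)]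

theorem eval_homogenize_eq_sum {R : Type*} [CommSemiring R] (p : R[X]) (k : ℕ) (x : Fin 2 → R) :
    MvPolynomial.eval x (p.homogenize k) =
      ∑ ij ∈ antidiagonal k, p.coeff ij.1 * x 0 ^ ij.1 * x 1 ^ ij.2 := by
  simp [homogenize, MvPolynomial.eval_monomial, Finsupp.prod_fintype, Fin.prod_univ_two, mul_assoc]

theorem eval_homogenize_prod {R : Type*} [CommRing R] {ι : Type*} (s : Finset ι) (f g : ι → R)
    (x : Fin 2 → R) :
    MvPolynomial.eval x ((∏ i ∈ s, (C (f i) * X - C (g i))).homogenize #s) =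
      ∏ i ∈ s, (f i * x 0 - g i * x 1) := by
  have hdeg : ∀ i ∈ s, (C (f i) * X - C (g i)).natDegree ≤ 1 := fun i _ => by
    rw [sub_eq_add_neg, ← C_neg]; exact natDegree_linear_le
  rw [card_eq_sum_ones, homogenize_finsetProd hdeg, map_prod]
  simp

theorem bform_C_mul_X_sub_C_pow (k : ℕ) (a b : ℂ) (r : ℂ[X]) :
    bform k ((C a * X - C b) ^ k) r = (-1) ^ k * MvPolynomial.eval ![b, a] (r.homogenize k) := by
  rw [eval_homogenize_eq_sum, ← Nat.sum_antidiagonal_swap,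
    Nat.sum_antidiagonal_eq_sum_range_succ_mk, mul_sum, bform]
  refine sum_congr rfl fun i hi => ?_
  have hik : i ≤ k := Nat.lt_succ_iff.mp (mem_range.mp hi)
  have hchoose : (k.choose i : ℂ) ≠ 0 := Nat.cast_ne_zero.mpr (Nat.choose_pos hik).ne'
  have hsign : (-1 : ℂ) ^ k = (-1) ^ i * (-1) ^ (k - i) := by
    rw [← pow_add, Nat.add_sub_cancel' hik]
  rw [sub_eq_add_neg, ← C_neg, coeff_C_mul_X_add_C_pow, neg_pow b, hsign]
  simp only [Prod.swap_prod_mk, Matrix.cons_val_zero, Matrix.cons_val_one]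
  field_simp

theorem bform_C_mul_X_sub_C_pow_prod {ι : Type*} (s : Finset ι) (f g : ι → ℂ) (a b : ℂ) :
    bform #s ((C a * X - C b) ^ #s) (∏ i ∈ s, (C (f i) * X - C (g i))) =
      (-1) ^ #s * ∏ i ∈ s, (f i * b - g i * a) := by
  rw [bform_C_mul_X_sub_C_pow, eval_homogenize_prod]
  rfl

theorem mul_sub_mul_ne_zero_of_not_exists_smul_eq {K : Type*} [Field K] {a b c d : K}
    (hab : (a, b) ≠ 0) (h : ¬ ∃ t : K, (c, d) = t • (a, b)) : a * d - b * c ≠ 0 := by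
  intro hdet
  apply h
  by_cases ha : a = 0
  · have hb : b ≠ 0 := fun hb => hab (by simp [ha, hb])
    refine ⟨d / b, Prod.ext ?_ ?_⟩
    · have : c = 0 := by simpa [ha, hb] using hdet
      simp [ha, this]
    · simp [hb]
  · refine ⟨c / a, Prod.ext ?_ ?_⟩
    · simp [ha]
    · simp only [Prod.smul_mk, smul_eq_mul]
      field_simp
      linear_combination hdet

theorem linearIndependent_of_apply_eq_zero_of_ne {ι α K : Type*} [Ring K] [NoZeroDivisors K]
    (f : ι → α → K) (x : ι → α) (hne : ∀ i j, i ≠ j → f i (x j) = 0)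
    (hdiag : ∀ i, f i (x i) ≠ 0) : LinearIndependent K f := by
  classical
  rw [linearIndependent_iff']
  intro s c hsum i hi
  have hxi := congrFun hsum (x i)
  rw [Finset.sum_apply, sum_eq_single_of_mem i hi fun j _ hji => by simp [hne j i hji]] at hxi
  exact (mul_eq_zero.mp hxi).resolve_right (hdiag i)

/-- `p_I` is realized as the polynomial function `x ↦ ∏_{j ∉ I} (L_j^k, x)` on binary forms,
with `L_j` encoded as `u_j X - v_j`. -/
theorem star_maps_linearIndependent_general (n k : ℕ)
    (u v : Fin n → ℂ) (hnz : ∀ i, ((u i, v i) : ℂ × ℂ) ≠ 0)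
    (hdist : ∀ i j, i ≠ j → ¬ ∃ c : ℂ, ((u j, v j) : ℂ × ℂ) = c • (u i, v i)) :
    LinearIndependent ℂ
      (fun I : Finset.powersetCard k (Finset.univ : Finset (Fin n)) =>
        (fun x : Polynomial ℂ =>
          ∏ j ∈ ((I : Finset (Fin n)))ᶜ,
            bform k ((Polynomial.C (u j) * Polynomial.X - Polynomial.C (v j)) ^ k) x)) := by
  have hcard (I : powersetCard k (univ : Finset (Fin n))) : #I.1 = k :=
    (mem_powersetCard.mp I.2).2
  have hpair (I : powersetCard k (univ : Finset (Fin n))) (j : Fin n) :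
      bform k ((C (u j) * X - C (v j)) ^ k) (∏ i ∈ I.1, (C (u i) * X - C (v i))) =
        (-1) ^ k * ∏ i ∈ I.1, (u i * v j - v i * u j) := by
    simpa only [hcard] using bform_C_mul_X_sub_C_pow_prod I.1 u v (u j) (v j)
  refine linearIndependent_of_apply_eq_zero_of_ne _
    (fun I => ∏ i ∈ I.1, (C (u i) * X - C (v i))) (fun I J hIJ => ?_) fun I => ?_
  · obtain ⟨j, hjJ, hjI⟩ : ∃ j ∈ J.1, j ∉ I.1 := by
      by_contra! hsub
      exact hIJ (Subtype.ext
        (eq_of_subset_of_card_le hsub ((hcard I).trans (hcard J).symm).le).symm)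
    refine prod_eq_zero (mem_compl.mpr hjI) ?_
    rw [hpair, prod_eq_zero hjJ (by ring), mul_zero]
  · refine prod_ne_zero_iff.mpr fun j hj => ?_
    rw [hpair]
    refine mul_ne_zero (pow_ne_zero _ (by norm_num)) (prod_ne_zero_iff.mpr fun i hi => ?_)
    exact mul_sub_mul_ne_zero_of_not_exists_smul_eq (hnz i)
      (hdist i j (ne_of_mem_of_not_mem hi (mem_compl.mp hj)))

/-- star-based construction, `ℂP¹` case: for distinct points of `ℂP¹` with
nonzero lifts `(uᵢ, vᵢ)`, `Lᵢ = uᵢ v - vᵢ u` (encoded as `uᵢ X - vᵢ`), `1 ≤ k ≤ n-1`,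
`d = n - k`, and for each `k`-subset `I` with complement `J`,
`p_I = ⊙_{j ∈ J} Λ_{L_j^k} ∈ Sym^d(P_{1,k}^*)` — realized here, via the canonical
embedding of `Sym^d` of the dual into functions, as the polynomial function
`x ↦ ∏_{j ∈ J} (L_j^k, x)` — the `binom(n,k)` elements `p_I` are linearly independent. -/
theorem star_maps_linearIndependent (n k : ℕ) (hk : 1 ≤ k) (hkn : k ≤ n - 1)
    (u v : Fin n → ℂ) (hnz : ∀ i, ((u i, v i) : ℂ × ℂ) ≠ 0)
    (hdist : ∀ i j, i ≠ j → ¬ ∃ c : ℂ, ((u j, v j) : ℂ × ℂ) = c • (u i, v i)) :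
    LinearIndependent ℂ
      (fun I : Finset.powersetCard k (Finset.univ : Finset (Fin n)) =>
        (fun x : Polynomial ℂ =>
          ∏ j ∈ ((I : Finset (Fin n)))ᶜ,
            bform k ((Polynomial.C (u j) * Polynomial.X - Polynomial.C (v j)) ^ k) x)) :=
  star_maps_linearIndependent_general n k u v hnz hdist
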